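/- arXiv:1907.10536 — 2 statements merged into one kernel-verified Lean document; each statement's English description precedes it below -/
import Mathlib

section
/- Let x be a solution trajectory of (DIN-AVD)_{α,β,b} with α ≥ 1. Suppose the growth conditions (G2): b(t) > β'(t) + β(t)/t for all t ≥ t₀, and (G3): t·w'(t) ≤ (α−3)·w(t) for all t ≥ t₀ hold, where w(t) := b(t) − β'(t) − β(t)/t. Then ∫_{t₀}^{∞} t·((α−3)w(t) − t·w'(t))·(f(x(t)) − min_H f) dt < +∞. -/
open Real Set MeasureTheory

/-!
Lyapunov argument. With the anchor `u(t) = (α - 1)(x(t) - x⋆) + t(ẋ(t) + β(t)∇f(x(t)))`, the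
equation gives `u̇ = -t w(t) ∇f(x(t))`, so the energy
`E(t) = t² w(t)(f(x(t)) - f(x⋆)) + ‖u(t)‖² / 2` satisfies, by convexity of `f` and `w, β ≥ 0`,
`Ė(t) ≤ -t((α - 3)w(t) - t ẇ(t))(f(x(t)) - f(x⋆))`. By (G3) and minimality of `x⋆` the right-hand side
is `≤ 0`, and `E ≥ 0`, so the integral of its negative over `[t₀, T]` is at most `E(t₀)` for every
`T`.
-/

open Filter InnerProductSpace

theorem ConvexOn.add_fderiv_sub_le {E : Type*} [NormedAddCommGroup E] [NormedSpace ℝ E]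
    {f : E → ℝ} (hf : ConvexOn ℝ univ f) {p : E} (hp : DifferentiableAt ℝ f p) (y : E) :
    f p + fderiv ℝ f p (y - p) ≤ f y := by
  set ℓ : ℝ →ᵃ[ℝ] E := AffineMap.lineMap p y
  have hline : ConvexOn ℝ univ (f ∘ ℓ) := hf.comp_affineMap ℓ
  have hp' : HasFDerivAt f (fderiv ℝ f p) (ℓ 0) := by
    simpa [ℓ] using hp.hasFDerivAt
  have hderiv : HasDerivAt (f ∘ ℓ) (fderiv ℝ f p (y - p)) 0 :=
    hp'.comp_hasDerivAt 0 AffineMap.hasDerivAt_lineMap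
  have := hline.le_slope_of_hasDerivAt (mem_univ 0) (mem_univ 1) one_pos hderiv
  simp only [slope_def_field, Function.comp_apply, ℓ, AffineMap.lineMap_apply_zero,
    AffineMap.lineMap_apply_one, sub_zero, div_one] at this
  linarith

theorem ConvexOn.sub_le_inner_gradient {H : Type*} [NormedAddCommGroup H] [InnerProductSpace ℝ H]
    [CompleteSpace H] {f : H → ℝ} (hf : ConvexOn ℝ univ f) {p : H} (hp : DifferentiableAt ℝ f p)
    (y : H) : f p - f y ≤ inner ℝ (gradient f p) (p - y) := by
  have := hf.add_fderiv_sub_le hp y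
  rw [← inner_gradient_left, ← neg_sub, inner_neg_right] at this
  linarith

theorem ContDiff.differentiable_gradient {H : Type*} [NormedAddCommGroup H]
    [InnerProductSpace ℝ H] [CompleteSpace H] {f : H → ℝ} {n : WithTop ℕ∞} (hf : ContDiff ℝ n f)
    (hn : 2 ≤ n) : Differentiable ℝ (gradient f) := by
  have hgrad : gradient f = (toDual ℝ H).symm ∘ fderiv ℝ f := rfl
  rw [hgrad]
  exact (toDual ℝ H).symm.toLinearIsometry.toContinuousLinearMap.differentiable.comp
    ((hf.fderiv_right (m := 1) (by rwa [one_add_one_eq_two])).differentiable one_ne_zero)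

theorem integrableOn_Ioi_deriv_of_nonneg_of_le {g g' : ℝ → ℝ} {a M : ℝ}
    (hg : ∀ t ∈ Ici a, HasDerivAt g (g' t) t) (hg' : ∀ t ∈ Ici a, 0 ≤ g' t)
    (hgM : ∀ t ∈ Ici a, g t ≤ M) : IntegrableOn g' (Ioi a) := by
  have hint : ∀ T ≥ a, IntegrableOn g' (Ioc a T) := fun T _ =>
    intervalIntegral.integrableOn_deriv_of_nonneg
      (fun t ht => (hg t ht.1).continuousAt.continuousWithinAt)
      (fun t ht => hg t (mem_Ici.2 ht.1.le)) (fun t ht => hg' t (mem_Ici.2 ht.1.le))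
  have hbound : ∀ T ≥ a, ∫ t in a..T, ‖g' t‖ ≤ M - g a := fun T hT => calc
    ∫ t in a..T, ‖g' t‖ = ∫ t in a..T, g' t :=
      intervalIntegral.integral_congr_ae (ae_of_all _ fun t ht =>
        norm_of_nonneg (hg' t (mem_Ici.2 (by rw [uIoc_of_le hT] at ht; exact ht.1.le))))
    _ = g T - g a := intervalIntegral.integral_eq_sub_of_hasDerivAt
        (fun t ht => hg t (by rw [uIcc_of_le hT] at ht; exact ht.1))
        ((intervalIntegrable_iff_integrableOn_Ioc_of_le hT).2 (hint T hT))
    _ ≤ M - g a := by linarith [hgM T hT]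
  exact integrableOn_Ioi_of_intervalIntegral_norm_bounded (M - g a) a
    (fun n : ℕ => hint (a + n) (le_add_of_nonneg_right n.cast_nonneg))
    (tendsto_atTop_add_const_left _ a tendsto_natCast_atTop_atTop)
    (Eventually.of_forall fun n => hbound (a + n) (le_add_of_nonneg_right n.cast_nonneg))

theorem aestronglyMeasurable_restrict_of_hasDerivAt {g g' : ℝ → ℝ} {s : Set ℝ}
    (hs : MeasurableSet s) (hg : ∀ t ∈ s, HasDerivAt g (g' t) t) :
    AEStronglyMeasurable g' (volume.restrict s) :=
  (aestronglyMeasurable_deriv g _).congr <|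
    (ae_restrict_mem hs).mono fun t ht => (hg t ht).deriv

theorem aestronglyMeasurable_dinavd_integrand {α : ℝ} {w w' g : ℝ → ℝ} {s : Set ℝ}
    (hs : MeasurableSet s) (hw' : ∀ t ∈ s, HasDerivAt w (w' t) t) (hg : ContinuousOn g s) :
    AEStronglyMeasurable (fun t => t * ((α - 3) * w t - t * w' t) * g t) (volume.restrict s) := by
  have hw : ContinuousOn w s :=
    continuousOn_of_forall_continuousAt fun t ht => (hw' t ht).continuousAt
  exact (aestronglyMeasurable_id.mul ((aestronglyMeasurable_const.mul
    (hw.aestronglyMeasurable hs)).sub (aestronglyMeasurable_id.mul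
      (aestronglyMeasurable_restrict_of_hasDerivAt hs hw')))).mul (hg.aestronglyMeasurable hs)

theorem integrableOn_Ici_of_le_neg_deriv {Φ E D : ℝ → ℝ} {a : ℝ}
    (hE : ∀ t ∈ Ici a, HasDerivAt E (D t) t) (hEnn : ∀ t ∈ Ici a, 0 ≤ E t)
    (hΦ : AEStronglyMeasurable Φ (volume.restrict (Ioi a)))
    (hΦnn : ∀ t ∈ Ici a, 0 ≤ Φ t) (hΦD : ∀ t ∈ Ici a, Φ t ≤ -D t) :
    IntegrableOn Φ (Ici a) := by
  have hD : IntegrableOn (fun t => -D t) (Ioi a) :=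
    integrableOn_Ioi_deriv_of_nonneg_of_le (g := fun t => -E t) (M := 0)
      (fun t ht => (hE t ht).neg) (fun t ht => (hΦnn t ht).trans (hΦD t ht))
      (fun t ht => neg_nonpos.2 (hEnn t ht))
  rw [integrableOn_Ici_iff_integrableOn_Ioi]
  refine hD.mono' hΦ ?_
  filter_upwards [ae_restrict_mem measurableSet_Ioi] with t ht
  rw [norm_of_nonneg (hΦnn t (mem_Ici.2 ht.out.le))]
  exact hΦD t (mem_Ici.2 ht.out.le)

section DINAVD

variable {H : Type*} [NormedAddCommGroup H] [InnerProductSpace ℝ H] [CompleteSpace H]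

noncomputable def dinavdAnchor (f : H → ℝ) (xstar : H) (α : ℝ) (β : ℝ → ℝ) (x x' : ℝ → H)
    (t : ℝ) : H :=
  (α - 1) • (x t - xstar) + t • (x' t + β t • gradient f (x t))

noncomputable def dinavdEnergy (f : H → ℝ) (xstar : H) (α : ℝ) (β w : ℝ → ℝ) (x x' : ℝ → H)
    (t : ℝ) : ℝ :=
  t ^ 2 * w t * (f (x t) - f xstar) + ‖dinavdAnchor f xstar α β x x' t‖ ^ 2 / 2

variable {f : H → ℝ} {xstar : H} {α : ℝ} {β β' b w w' : ℝ → ℝ} {x x' x'' : ℝ → H} {t : ℝ}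

theorem dinavdEnergy_nonneg (hw : 0 ≤ w t) (hmin : f xstar ≤ f (x t)) :
    0 ≤ dinavdEnergy f xstar α β w x x' t := by
  have := sub_nonneg.2 hmin
  unfold dinavdEnergy
  positivity

theorem hasDerivAt_dinavdAnchor (ht : t ≠ 0) (hx' : HasDerivAt x (x' t) t)
    (hx'' : HasDerivAt x' (x'' t) t) (hβ' : HasDerivAt β (β' t) t)
    (hG : DifferentiableAt ℝ (gradient f) (x t))
    (hode : x'' t + (α / t) • x' t + β t • (fderiv ℝ (gradient f) (x t)) (x' t)
        + b t • gradient f (x t) = 0) :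
    HasDerivAt (dinavdAnchor f xstar α β x x')
      (-(t * (b t - β' t - β t / t)) • gradient f (x t)) t := by
  have hGx : HasDerivAt (fun s => gradient f (x s)) (fderiv ℝ (gradient f) (x t) (x' t)) t :=
    hG.hasFDerivAt.comp_hasDerivAt t hx'
  have h := (((hx'.sub_const xstar).const_smul (α - 1)).add
    ((hasDerivAt_id t).smul (hx''.add (hβ'.smul hGx))))
  refine (h : HasDerivAt (dinavdAnchor f xstar α β x x') _ t).congr_deriv ?_
  have hx''_eq : x'' t = -((α / t) • x' t + β t • fderiv ℝ (gradient f) (x t) (x' t)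
      + b t • gradient f (x t)) :=
    eq_neg_of_add_eq_zero_right (by rw [← hode]; abel)
  rw [hx''_eq]
  simp only [id, one_smul, Pi.add_apply, Pi.smul_apply']
  match_scalars <;> field_simp <;> ring

theorem hasDerivAt_dinavdEnergy (hfx : DifferentiableAt ℝ f (x t))
    (hx' : HasDerivAt x (x' t) t) (hw' : HasDerivAt w (w' t) t)
    (hu : HasDerivAt (dinavdAnchor f xstar α β x x') (-(t * w t) • gradient f (x t)) t) :
    HasDerivAt (dinavdEnergy f xstar α β w x x')
      ((2 * t * w t + t ^ 2 * w' t) * (f (x t) - f xstar)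
        - t * w t * ((α - 1) * inner ℝ (gradient f (x t)) (x t - xstar)
          + t * β t * ‖gradient f (x t)‖ ^ 2)) t := by
  have hfx' : HasDerivAt (fun s => f (x s)) (inner ℝ (gradient f (x t)) (x' t)) t := by
    rw [inner_gradient_left]
    exact hfx.hasFDerivAt.comp_hasDerivAt t hx'
  have h := (((hasDerivAt_pow 2 t).mul hw').mul (hfx'.sub_const (f xstar))).add
    (hu.norm_sq.div_const 2)
  refine (h : HasDerivAt (dinavdEnergy f xstar α β w x x') _ t).congr_deriv ?_
  simp only [dinavdAnchor, Pi.mul_apply, real_inner_smul_right, inner_add_right,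
    real_inner_comm (gradient f (x t)), real_inner_self_eq_norm_sq]
  push_cast
  ring

theorem le_neg_dinavdEnergy_deriv (hconv : ConvexOn ℝ univ f)
    (hfx : DifferentiableAt ℝ f (x t)) (ht : 0 ≤ t) (hα : 1 ≤ α) (hβ : 0 ≤ β t) (hw : 0 ≤ w t) :
    t * ((α - 3) * w t - t * w' t) * (f (x t) - f xstar)
      ≤ -((2 * t * w t + t ^ 2 * w' t) * (f (x t) - f xstar)
        - t * w t * ((α - 1) * inner ℝ (gradient f (x t)) (x t - xstar)
          + t * β t * ‖gradient f (x t)‖ ^ 2)) := by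
  have hgap := hconv.sub_le_inner_gradient hfx xstar
  have htw : 0 ≤ t * w t := mul_nonneg ht hw
  nlinarith [mul_nonneg (mul_nonneg htw (sub_nonneg.2 hα)) (sub_nonneg.2 hgap),
    mul_nonneg (mul_nonneg htw (mul_nonneg ht hβ)) (sq_nonneg ‖gradient f (x t)‖)]

end DINAVD

theorem dinavd_values_integrability_general
    {H : Type*} [NormedAddCommGroup H] [InnerProductSpace ℝ H] [CompleteSpace H]
    (f : H → ℝ) (hf : ContDiff ℝ 2 f) (hconv : ConvexOn ℝ Set.univ f)
    (xstar : H) (hmin : ∀ y, f xstar ≤ f y)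
    (t₀ : ℝ) (ht₀ : 0 < t₀)
    (α : ℝ) (hα : 1 ≤ α)
    (β b β' w w' : ℝ → ℝ)
    (hβnn : ∀ t ≥ t₀, 0 ≤ β t)
    (hβ' : ∀ t ≥ t₀, HasDerivAt β (β' t) t)
    (hw : ∀ t ≥ t₀, w t = b t - β' t - β t / t)
    (hw' : ∀ t ≥ t₀, HasDerivAt w (w' t) t)
    (x x' x'' : ℝ → H)
    (hx' : ∀ t ≥ t₀, HasDerivAt x (x' t) t)
    (hx'' : ∀ t ≥ t₀, HasDerivAt x' (x'' t) t)
    (hode : ∀ t ≥ t₀,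
      x'' t + (α / t) • x' t + β t • (fderiv ℝ (gradient f) (x t)) (x' t)
        + b t • gradient f (x t) = 0)
    (hG2 : ∀ t ≥ t₀, β' t + β t / t < b t)
    (hG3 : ∀ t ≥ t₀, t * w' t ≤ (α - 3) * w t) :
    IntegrableOn
      (fun t => t * ((α - 3) * w t - t * w' t) * (f (x t) - f xstar))
      (Set.Ici t₀) := by
  have hpos : ∀ t ≥ t₀, 0 < t := fun t ht => ht₀.trans_le ht
  have hwnn : ∀ t ≥ t₀, 0 ≤ w t := fun t ht => by linarith [hw t ht, hG2 t ht]
  have hfd : Differentiable ℝ f := hf.differentiable two_ne_zero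
  refine integrableOn_Ici_of_le_neg_deriv (E := dinavdEnergy f xstar α β w x x')
    (fun t ht => hasDerivAt_dinavdEnergy (hfd _) (hx' t ht) (hw' t ht) ?_)
    (fun t ht => dinavdEnergy_nonneg (hwnn t ht) (hmin (x t)))
    (aestronglyMeasurable_dinavd_integrand measurableSet_Ioi (fun t ht => hw' t ht.out.le)
      (continuousOn_of_forall_continuousAt fun t ht =>
        ((hfd _).continuousAt.comp (hx' t ht.out.le).continuousAt).sub continuousAt_const))
    (fun t ht => mul_nonneg (mul_nonneg (hpos t ht).le (by linarith [hG3 t ht]))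
      (sub_nonneg.2 (hmin (x t))))
    (fun t ht => le_neg_dinavdEnergy_deriv hconv (hfd _) (hpos t ht).le hα (hβnn t ht) (hwnn t ht))
  rw [hw t ht]
  exact hasDerivAt_dinavdAnchor (hpos t ht).ne' (hx' t ht) (hx'' t ht) (hβ' t ht)
    (hf.differentiable_gradient le_rfl _) (hode t ht)

/-- Theorem 2.1 (iii): integrability of the values for (DIN-AVD)_{α,β,b}. -/
theorem dinavd_values_integrability
    {H : Type*} [NormedAddCommGroup H] [InnerProductSpace ℝ H] [CompleteSpace H]
    (f : H → ℝ) (hf : ContDiff ℝ 2 f) (hconv : ConvexOn ℝ Set.univ f)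
    (xstar : H) (hmin : ∀ y, f xstar ≤ f y)
    (t₀ : ℝ) (ht₀ : 0 < t₀)
    (α : ℝ) (hα : 1 ≤ α)
    (β b β' b' w w' : ℝ → ℝ)
    (hβnn : ∀ t ≥ t₀, 0 ≤ β t) (hbnn : ∀ t ≥ t₀, 0 ≤ b t)
    (hβ' : ∀ t ≥ t₀, HasDerivAt β (β' t) t)
    (hb' : ∀ t ≥ t₀, HasDerivAt b (b' t) t)
    (hw : ∀ t ≥ t₀, w t = b t - β' t - β t / t)
    (hw' : ∀ t ≥ t₀, HasDerivAt w (w' t) t)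
    (x x' x'' : ℝ → H)
    (hx' : ∀ t ≥ t₀, HasDerivAt x (x' t) t)
    (hx'' : ∀ t ≥ t₀, HasDerivAt x' (x'' t) t)
    (hx''cont : ContinuousOn x'' (Set.Ici t₀))
    (hode : ∀ t ≥ t₀,
      x'' t + (α / t) • x' t + β t • (fderiv ℝ (gradient f) (x t)) (x' t)
        + b t • gradient f (x t) = 0)
    (hG2 : ∀ t ≥ t₀, β' t + β t / t < b t)
    (hG3 : ∀ t ≥ t₀, t * w' t ≤ (α - 3) * w t) :
    IntegrableOn
      (fun t => t * ((α - 3) * w t - t * w' t) * (f (x t) - f xstar))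
      (Set.Ici t₀) :=
  dinavd_values_integrability_general f hf hconv xstar hmin t₀ ht₀ α hα β b β' w w' hβnn hβ' hw hw'
    x x' x'' hx' hx'' hode hG2 hG3
end

section
/- Let f : H → ℝ be a μ-strongly convex function of class C² with unique minimizer x*, let 0 ≤ β ≤ 1/(2√μ), and let x : [t₀,∞) → H be a twice continuously differentiable solution of ẍ(t) + 2√μ·ẋ(t) + β·∇²f(x(t))ẋ(t) + ∇f(x(t)) = 0. Then there exists a constant C₁ > 0 such that for all t ≥ t₀, e^{−√μ·t} ∫_{t₀}^{t} e^{√μ·s} ‖∇f(x(s))‖² ds ≤ C₁·e^{−(√μ/2)t}; moreover ∫_{t₀}^{∞} e^{(√μ/2)t} ‖ẋ(t)‖² dt < +∞. -/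
/-!
Write `s = √μ` and `v = s • (x - x*) + ẋ + β • ∇f(x)`. Along the trajectory the energy
`E = f(x) - f(x*) + ‖v‖² / 2` satisfies `Ė + (s/2) E ≤ -(3s/16) ‖ẋ‖²`: this uses strong
convexity twice and `sβ ≤ 1/2`. Integrating against `e^{st/2}` gives both `E(t) = O(e^{-st/2})`
and `∫ e^{st/2} ‖ẋ‖² < ∞`. Strong convexity turns the energy bound into
`‖x(t) - x*‖² = O(e^{-st/2})`; since `∇f` is differentiable at `x*` and vanishes there, also
`‖∇f(x(t))‖² = O(e^{-st/2})`, and integrating this against `e^{st}` gives the averaged estimate.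
-/

open Real Set Filter Topology MeasureTheory
open scoped RealInnerProductSpace

theorem exp_mul_add_integral_le_of_hasDerivAt {E E' c : ℝ → ℝ} {a t₀ t : ℝ}
    (hE : ∀ u ≥ t₀, HasDerivAt E (E' u) u) (hc : ContinuousOn c (Ici t₀))
    (hEc : ∀ u ≥ t₀, E' u + a * E u ≤ -c u) (ht : t₀ ≤ t) :
    exp (a * t) * E t + ∫ u in t₀..t, exp (a * u) * c u ≤ exp (a * t₀) * E t₀ := by
  -- freezing `c` to the left of `t₀` makes it continuous, so that its primitive is differentiable
  set c' : ℝ → ℝ := fun u => exp (a * u) * c (max u t₀)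
  have hc' : Continuous c' := (continuous_exp.comp (continuous_const_mul a)).mul
    (hc.comp_continuous (continuous_id.max continuous_const) fun u => le_max_right u t₀)
  have hY : ∀ u ≥ t₀, HasDerivAt (fun r => exp (a * r) * E r + ∫ v in t₀..r, c' v)
      (exp (a * u) * (E' u + a * E u) + c' u) u := by
    intro u hu
    have hexp : HasDerivAt (fun r => exp (a * r)) (exp (a * u) * a) u := by
      simpa using ((hasDerivAt_id u).const_mul a).exp
    exact ((hexp.mul (hE u hu)).add (hc'.integral_hasStrictDerivAt t₀ u).hasDerivAt).congr_deriv
      (by ring)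
  have hanti := antitoneOn_of_hasDerivWithinAt_nonpos (convex_Ici t₀)
    (fun u hu => (hY u hu).continuousAt.continuousWithinAt)
    (fun u hu => (hY u (interior_subset hu)).hasDerivWithinAt) fun u hu => by
      have hu' : t₀ ≤ u := interior_subset hu
      simp only [c', max_eq_left hu']
      nlinarith [mul_le_mul_of_nonneg_left (hEc u hu') (exp_pos (a * u)).le]
  have hcc' : ∫ u in t₀..t, c' u = ∫ u in t₀..t, exp (a * u) * c u :=
    intervalIntegral.integral_congr fun u hu => by
      simp only [c', max_eq_left (uIcc_of_le ht ▸ hu).1]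
  simpa [hcc'] using hanti self_mem_Ici ht ht

theorem ContinuousOn.exists_pos_forall_Ici_le_of_eventually_le {g : ℝ → ℝ} {t₀ C : ℝ}
    (hg : ContinuousOn g (Ici t₀)) (hC : ∀ᶠ t in atTop, g t ≤ C) :
    ∃ K > 0, ∀ t ≥ t₀, g t ≤ K := by
  obtain ⟨T, hT⟩ := eventually_atTop.1 hC
  obtain ⟨M, hM⟩ :=
    isCompact_Icc.bddAbove_image (hg.mono (Icc_subset_Ici_self : Icc t₀ T ⊆ Ici t₀))
  refine ⟨max (max C M) 1, by positivity, fun t ht => ?_⟩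
  rcases le_total t T with htT | hTt
  · exact (hM (mem_image_of_mem g ⟨ht, htT⟩)).trans (le_max_of_le_left (le_max_right C M))
  · exact (hT t hTt).trans (le_max_of_le_left (le_max_left C M))

theorem exp_neg_mul_integral_exp_mul_le {g : ℝ → ℝ} {a b K t₀ t : ℝ} (hba : b < a) (hK : 0 ≤ K)
    (ht : t₀ ≤ t) (hg : ContinuousOn g (Icc t₀ t)) (hgK : ∀ u ∈ Icc t₀ t, g u ≤ K * exp (-b * u)) :
    exp (-a * t) * ∫ u in t₀..t, exp (a * u) * g u ≤ K / (a - b) * exp (-b * t) := by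
  have hab : 0 < a - b := sub_pos.2 hba
  have hint : ∫ u in t₀..t, K * exp ((a - b) * u)
      = K / (a - b) * (exp ((a - b) * t) - exp ((a - b) * t₀)) := by
    simp only [intervalIntegral.integral_const_mul, intervalIntegral.integral_comp_mul_left _
      hab.ne', integral_exp, smul_eq_mul]
    ring
  have hmono : ∫ u in t₀..t, exp (a * u) * g u ≤ ∫ u in t₀..t, K * exp ((a - b) * u) := by
    refine intervalIntegral.integral_mono_on ht ?_ ?_ fun u hu => ?_
    · exact ((continuous_exp.comp (continuous_const_mul a)).continuousOn.mul
        hg).intervalIntegrable_of_Icc ht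
    · exact (by fun_prop : Continuous fun u => K * exp ((a - b) * u)).intervalIntegrable _ _
    · calc exp (a * u) * g u ≤ exp (a * u) * (K * exp (-b * u)) :=
            mul_le_mul_of_nonneg_left (hgK u hu) (exp_pos _).le
        _ = K * exp ((a - b) * u) := by rw [mul_left_comm, ← exp_add]; ring_nf
  calc exp (-a * t) * ∫ u in t₀..t, exp (a * u) * g u
      ≤ exp (-a * t) * (K / (a - b) * exp ((a - b) * t)) := by
        refine mul_le_mul_of_nonneg_left (hmono.trans ?_) (exp_pos _).le
        rw [hint]
        have : 0 ≤ K / (a - b) * exp ((a - b) * t₀) := by positivity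
        linarith
    _ = K / (a - b) * exp (-b * t) := by rw [mul_left_comm, ← exp_add]; ring_nf

theorem integrableOn_Ici_of_intervalIntegral_le {g : ℝ → ℝ} {t₀ B : ℝ}
    (hg : ContinuousOn g (Ici t₀)) (hg₀ : ∀ t ≥ t₀, 0 ≤ g t)
    (hB : ∀ t ≥ t₀, ∫ u in t₀..t, g u ≤ B) : IntegrableOn g (Ici t₀) := by
  rw [integrableOn_Ici_iff_integrableOn_Ioi]
  refine integrableOn_Ioi_of_intervalIntegral_norm_bounded B t₀
    (fun i => ((hg.mono Icc_subset_Ici_self).integrableOn_Icc).mono_set Ioc_subset_Icc_self)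
    tendsto_id ((eventually_ge_atTop t₀).mono fun t ht => ?_)
  rw [id, intervalIntegral.integral_congr fun u hu => norm_of_nonneg (hg₀ u ?_)]
  · exact hB t ht
  · exact (uIcc_of_le ht ▸ hu).1

theorem exists_sq_norm_le_mul_exp_of_sq_norm_sub_le {E F : Type*} [NormedAddCommGroup E]
    [NormedSpace ℝ E] [NormedAddCommGroup F] [NormedSpace ℝ F] {g : E → F} {y : ℝ → E} {z : E}
    {a C t₀ : ℝ} (ha : 0 < a) (hgz : g z = 0) (hgd : DifferentiableAt ℝ g z)
    (hgy : ContinuousOn (fun t => g (y t)) (Ici t₀))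
    (hyz : ∀ t ≥ t₀, ‖y t - z‖ ^ 2 ≤ C * exp (-a * t)) :
    ∃ K > 0, ∀ t ≥ t₀, ‖g (y t)‖ ^ 2 ≤ K * exp (-a * t) := by
  have hy : Tendsto y atTop (𝓝 z) := by
    have hC : Tendsto (fun t => C * exp (-a * t)) atTop (𝓝 0) := by
      simpa [neg_mul] using
        (tendsto_exp_neg_atTop_nhds_zero.comp (tendsto_id.const_mul_atTop ha)).const_mul C
    have hsq : Tendsto (fun t => ‖y t - z‖ ^ 2) atTop (𝓝 0) :=
      squeeze_zero' (Eventually.of_forall fun t => by positivity)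
        ((eventually_ge_atTop t₀).mono hyz) hC
    rw [tendsto_iff_norm_sub_tendsto_zero]
    simpa [sqrt_sq (norm_nonneg _)] using hsq.sqrt
  obtain ⟨L, hL⟩ := hgd.hasFDerivAt.isBigO_sub.bound
  have hbdd : ∀ᶠ t in atTop, exp (a * t) * ‖g (y t)‖ ^ 2 ≤ L ^ 2 * C := by
    filter_upwards [hy.eventually hL, eventually_ge_atTop t₀] with t hLt ht
    rw [hgz, sub_zero] at hLt
    calc exp (a * t) * ‖g (y t)‖ ^ 2 ≤ exp (a * t) * (L ^ 2 * (C * exp (-a * t))) := by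
          refine mul_le_mul_of_nonneg_left ?_ (exp_pos _).le
          calc ‖g (y t)‖ ^ 2 ≤ (L * ‖y t - z‖) ^ 2 := pow_le_pow_left₀ (norm_nonneg _) hLt 2
            _ ≤ L ^ 2 * (C * exp (-a * t)) := by
              rw [mul_pow]; exact mul_le_mul_of_nonneg_left (hyz t ht) (sq_nonneg L)
      _ = L ^ 2 * C := by rw [mul_left_comm, mul_left_comm (exp _), ← exp_add]; simp
  obtain ⟨K, hK, hKbdd⟩ := ContinuousOn.exists_pos_forall_Ici_le_of_eventually_le
    ((continuous_exp.comp (continuous_const_mul a)).continuousOn.mul (hgy.norm.pow 2)) hbdd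
  refine ⟨K, hK, fun t ht => ?_⟩
  calc ‖g (y t)‖ ^ 2 = exp (-a * t) * (exp (a * t) * ‖g (y t)‖ ^ 2) := by
        rw [← mul_assoc, ← exp_add]; simp
    _ ≤ exp (-a * t) * K := mul_le_mul_of_nonneg_left (hKbdd t ht) (exp_pos _).le
    _ = K * exp (-a * t) := mul_comm _ _

theorem ConvexOn.add_le_of_hasFDerivAt {E : Type*} [NormedAddCommGroup E] [NormedSpace ℝ E]
    {S : Set E} {g : E → ℝ} {g' : E →L[ℝ] ℝ} {p q : E} (hg : ConvexOn ℝ S g) (hp : p ∈ S)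
    (hq : q ∈ S) (hd : HasFDerivAt g g' p) : g p + g' (q - p) ≤ g q := by
  have hline := hg.comp_affineMap (AffineMap.lineMap (k := ℝ) p q)
  have hder : HasDerivAt (g ∘ AffineMap.lineMap (k := ℝ) p q) (g' (q - p)) 0 :=
    HasFDerivAt.comp_hasDerivAt (x := (0 : ℝ)) (by simpa using hd) AffineMap.hasDerivAt_lineMap
  have := hline.le_slope_of_hasDerivAt (x := 0) (y := 1) (by simpa) (by simpa) zero_lt_one hder
  simpa [slope_def_field, le_sub_iff_add_le'] using this

-- `lyapunov_decay_inner` for `a = ‖X‖`, `b = ‖W‖`, `g = ‖G‖`, `p₁ = ⟪X, W⟫`, `p₂ = ⟪G, X⟫`,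
-- `p₃ = ⟪W, G⟫`
theorem lyapunov_decay_real {s β a b g F p₁ p₂ p₃ : ℝ} (hs : 0 < s) (hβ0 : 0 ≤ β)
    (hsβ : s * β ≤ 1 / 2)
    (hF₁ : F + s ^ 2 / 2 * a ^ 2 ≤ p₂) (hF₂ : s ^ 2 / 2 * a ^ 2 ≤ F)
    (hp₁ : -(a * b) ≤ p₁) (hp₃ : -(b * g) ≤ p₃) :
    (-s ^ 2 * p₁ - s * b ^ 2 - s * β * p₃ - s * p₂ - β * g ^ 2)
      + s / 2 * (F + 1 / 2 * (s ^ 2 * a ^ 2 + b ^ 2 + β ^ 2 * g ^ 2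
        + 2 * s * p₁ + 2 * s * β * p₂ + 2 * β * p₃))
    ≤ -(3 * s / 16) * b ^ 2 := by
  have c₁ : 0 ≤ s - s ^ 2 * β / 2 := by nlinarith
  have c₂ : 0 ≤ s / 2 - s ^ 2 * β / 2 := by nlinarith
  have c₃ : 0 ≤ 1 / 2 - s * β := by linarith
  nlinarith [mul_nonneg c₁ (by linarith : 0 ≤ p₂ - F - s ^ 2 / 2 * a ^ 2),
    mul_nonneg c₂ (by linarith : 0 ≤ F - s ^ 2 / 2 * a ^ 2),
    mul_nonneg hs.le (sq_nonneg (s * a - b)), mul_nonneg hβ0 (sq_nonneg (2 * g - s * b)),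
    mul_nonneg c₃ (by positivity : 0 ≤ s * b ^ 2), mul_nonneg c₃ (by positivity : 0 ≤ β * g ^ 2),
    mul_nonneg c₃ (by positivity : 0 ≤ s ^ 3 * a ^ 2),
    mul_nonneg (by positivity : 0 ≤ s ^ 2 / 2) (by linarith : 0 ≤ p₁ + a * b),
    mul_nonneg (by positivity : 0 ≤ s * β / 2) (by linarith : 0 ≤ p₃ + b * g)]

section InnerProduct

variable {H : Type*} [NormedAddCommGroup H] [InnerProductSpace ℝ H]

theorem lyapunov_decay_inner {s β F : ℝ} {X W G : H} (hs : 0 < s) (hβ0 : 0 ≤ β)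
    (hsβ : s * β ≤ 1 / 2) (hF₁ : F + s ^ 2 / 2 * ‖X‖ ^ 2 ≤ ⟪G, X⟫) (hF₂ : s ^ 2 / 2 * ‖X‖ ^ 2 ≤ F) :
    ⟪G, W⟫ + ⟪-(s • W) - G, s • X + W + β • G⟫ + s / 2 * (F + 1 / 2 * ‖s • X + W + β • G‖ ^ 2)
      ≤ -(3 * s / 16) * ‖W‖ ^ 2 := by
  have hrate : ⟪G, W⟫ + ⟪-(s • W) - G, s • X + W + β • G⟫
      = -s ^ 2 * ⟪X, W⟫ - s * ‖W‖ ^ 2 - s * β * ⟪W, G⟫ - s * ⟪G, X⟫ - β * ‖G‖ ^ 2 := by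
    simp only [inner_add_right, inner_sub_left, inner_neg_left, real_inner_smul_left,
      real_inner_smul_right, real_inner_self_eq_norm_sq, real_inner_comm W G,
      real_inner_comm X W, real_inner_comm X G]
    ring
  have hnorm : ‖s • X + W + β • G‖ ^ 2 = s ^ 2 * ‖X‖ ^ 2 + ‖W‖ ^ 2 + β ^ 2 * ‖G‖ ^ 2
      + 2 * s * ⟪X, W⟫ + 2 * s * β * ⟪G, X⟫ + 2 * β * ⟪W, G⟫ := by
    rw [← real_inner_self_eq_norm_sq]
    simp only [inner_add_right, inner_add_left, real_inner_smul_left, real_inner_smul_right,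
      real_inner_self_eq_norm_sq, real_inner_comm W G, real_inner_comm X W, real_inner_comm X G,
      norm_smul, mul_pow, norm_eq_abs, sq_abs]
    ring
  rw [hrate, hnorm]
  exact lyapunov_decay_real hs hβ0 hsβ hF₁ hF₂
    (neg_le_of_abs_le (abs_real_inner_le_norm X W)) (neg_le_of_abs_le (abs_real_inner_le_norm W G))

variable [CompleteSpace H]

theorem IsLocalMin.gradient_eq_zero {f : H → ℝ} {a : H} (h : IsLocalMin f a) :
    gradient f a = 0 := by
  simp [gradient, h.fderiv_eq_zero]

theorem StrongConvexOn.add_inner_gradient_add_le {S : Set H} {m : ℝ} {f : H → ℝ} {p q : H}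
    (hf : StrongConvexOn S m f) (hp : p ∈ S) (hq : q ∈ S) (hfp : DifferentiableAt ℝ f p) :
    f p + ⟪gradient f p, q - p⟫ + m / 2 * ‖q - p‖ ^ 2 ≤ f q := by
  have hd := hfp.hasFDerivAt.sub ((hasStrictFDerivAt_norm_sq p).hasFDerivAt.const_mul (m / 2))
  have key := (strongConvexOn_iff_convex.1 hf).add_le_of_hasFDerivAt hp hq hd
  simp only [sub_apply, smul_apply, innerSL_apply_apply, ← inner_gradient_left, smul_eq_mul,
    nsmul_eq_mul, Nat.cast_ofNat, inner_sub_right, real_inner_self_eq_norm_sq] at key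
  rw [norm_sub_sq_real, inner_sub_right, real_inner_comm p q]
  linarith

theorem StrongConvexOn.mul_sq_norm_sub_le_sub {m : ℝ} {f : H → ℝ} {xstar : H}
    (hf : StrongConvexOn univ m f) (hmin : ∀ y, f xstar ≤ f y) (hfx : DifferentiableAt ℝ f xstar)
    (p : H) : m / 2 * ‖p - xstar‖ ^ 2 ≤ f p - f xstar := by
  have := hf.add_inner_gradient_add_le (mem_univ xstar) (mem_univ p) hfx
  rw [IsLocalMin.gradient_eq_zero (Eventually.of_forall hmin), inner_zero_left] at this
  linarith

/-- The dynamic inertial Newton system (DIN) `ẍ + γ ẋ + β ∇²f(x) ẋ + ∇f(x) = 0` on `[t₀, ∞)`,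
with `x'` and `x''` in the roles of `ẋ` and `ẍ`. -/
structure IsDINSolution (f : H → ℝ) (γ β t₀ : ℝ) (x x' x'' : ℝ → H) : Prop where
  hasDerivAt : ∀ t ≥ t₀, HasDerivAt x (x' t) t
  hasDerivAt_velocity : ∀ t ≥ t₀, HasDerivAt x' (x'' t) t
  ode : ∀ t ≥ t₀,
    x'' t + γ • x' t + β • fderiv ℝ (gradient f) (x t) (x' t) + gradient f (x t) = 0

section Lyapunov

variable (f : H → ℝ) (s β : ℝ) (xstar : H)

noncomputable def lyapunovVector (p w : H) : H := s • (p - xstar) + w + β • gradient f p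

noncomputable def lyapunovEnergy (p w : H) : ℝ :=
  f p - f xstar + 1 / 2 * ‖lyapunovVector f s β xstar p w‖ ^ 2

variable {f s β xstar}

theorem sq_norm_sub_le_lyapunovEnergy (hf : StrongConvexOn univ (s ^ 2) f)
    (hmin : ∀ y, f xstar ≤ f y) (hfx : DifferentiableAt ℝ f xstar) (p w : H) :
    s ^ 2 / 2 * ‖p - xstar‖ ^ 2 ≤ lyapunovEnergy f s β xstar p w := by
  have := hf.mul_sq_norm_sub_le_sub hmin hfx p
  unfold lyapunovEnergy
  nlinarith [sq_nonneg ‖lyapunovVector f s β xstar p w‖]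

theorem lyapunovEnergy_nonneg (hmin : ∀ y, f xstar ≤ f y) (p w : H) :
    0 ≤ lyapunovEnergy f s β xstar p w := by
  have := sub_nonneg.2 (hmin p)
  unfold lyapunovEnergy
  positivity

theorem lyapunovEnergy_rate_le (hs : 0 < s) (hβ0 : 0 ≤ β) (hsβ : s * β ≤ 1 / 2)
    (hf : StrongConvexOn univ (s ^ 2) f) (hmin : ∀ y, f xstar ≤ f y)
    {p : H} (hfp : DifferentiableAt ℝ f p) (hfx : DifferentiableAt ℝ f xstar) (w : H) :
    ⟪gradient f p, w⟫ + ⟪-(s • w) - gradient f p, lyapunovVector f s β xstar p w⟫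
      + s / 2 * lyapunovEnergy f s β xstar p w ≤ -(3 * s / 16) * ‖w‖ ^ 2 := by
  have hF₁ : f p - f xstar + s ^ 2 / 2 * ‖p - xstar‖ ^ 2 ≤ ⟪gradient f p, p - xstar⟫ := by
    have := hf.add_inner_gradient_add_le (mem_univ p) (mem_univ xstar) hfp
    rw [← neg_sub p xstar, inner_neg_right, norm_neg] at this
    linarith
  exact lyapunov_decay_inner hs hβ0 hsβ hF₁ (hf.mul_sq_norm_sub_le_sub hmin hfx p)

theorem hasDerivAt_lyapunovEnergy {x x' x'' : ℝ → H} {t : ℝ}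
    (hfx : DifferentiableAt ℝ f (x t)) (hgx : DifferentiableAt ℝ (gradient f) (x t))
    (hx : HasDerivAt x (x' t) t) (hx' : HasDerivAt x' (x'' t) t)
    (hode : x'' t + (2 * s) • x' t + β • fderiv ℝ (gradient f) (x t) (x' t)
      + gradient f (x t) = 0) :
    HasDerivAt (fun u => lyapunovEnergy f s β xstar (x u) (x' u))
      (⟪gradient f (x t), x' t⟫
        + ⟪-(s • x' t) - gradient f (x t), lyapunovVector f s β xstar (x t) (x' t)⟫) t := by
  have hv : HasDerivAt (fun u => lyapunovVector f s β xstar (x u) (x' u))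
      (-(s • x' t) - gradient f (x t)) t := by
    have := (((hx.sub_const xstar).const_smul s).add hx').add
      ((hgx.hasFDerivAt.comp_hasDerivAt t hx).const_smul β)
    refine this.congr_deriv ?_
    rw [← sub_eq_zero, ← hode]
    simp only [two_mul, add_smul]
    abel
  have hfx' : HasDerivAt (fun u => f (x u)) ⟪gradient f (x t), x' t⟫ t := by
    simpa [Function.comp_def, inner_gradient_left] using hfx.hasFDerivAt.comp_hasDerivAt t hx
  refine ((hfx'.sub_const (f xstar)).add ((hv.norm_sq).const_mul (1 / 2))).congr_deriv ?_
  rw [real_inner_comm (lyapunovVector f s β xstar (x t) (x' t))]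
  ring

variable {x x' x'' : ℝ → H} {t₀ : ℝ}

theorem IsDINSolution.exp_mul_lyapunovEnergy_add_integral_le
    (hx : IsDINSolution f (2 * s) β t₀ x x' x'') (hs : 0 < s) (hβ0 : 0 ≤ β)
    (hsβ : s * β ≤ 1 / 2) (hf : StrongConvexOn univ (s ^ 2) f) (hmin : ∀ y, f xstar ≤ f y)
    (hfd : Differentiable ℝ f) (hgd : Differentiable ℝ (gradient f)) {t : ℝ} (ht : t₀ ≤ t) :
    exp (s / 2 * t) * lyapunovEnergy f s β xstar (x t) (x' t)
        + ∫ u in t₀..t, exp (s / 2 * u) * (3 * s / 16 * ‖x' u‖ ^ 2)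
      ≤ exp (s / 2 * t₀) * lyapunovEnergy f s β xstar (x t₀) (x' t₀) := by
  refine exp_mul_add_integral_le_of_hasDerivAt (fun u hu => hasDerivAt_lyapunovEnergy (hfd _)
      (hgd _) (hx.hasDerivAt u hu) (hx.hasDerivAt_velocity u hu) (hx.ode u hu))
    (fun u hu => (continuousAt_const.mul
      ((hx.hasDerivAt_velocity u hu).continuousAt.norm.pow 2)).continuousWithinAt)
    (fun u _ => ?_) ht
  have := lyapunovEnergy_rate_le hs hβ0 hsβ hf hmin (hfd (x u)) (hfd xstar) (x' u)
  linarith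

theorem IsDINSolution.exists_sq_norm_sub_le_mul_exp
    (hx : IsDINSolution f (2 * s) β t₀ x x' x'') (hs : 0 < s) (hβ0 : 0 ≤ β)
    (hsβ : s * β ≤ 1 / 2) (hf : StrongConvexOn univ (s ^ 2) f) (hmin : ∀ y, f xstar ≤ f y)
    (hfd : Differentiable ℝ f) (hgd : Differentiable ℝ (gradient f)) :
    ∃ C, ∀ t ≥ t₀, ‖x t - xstar‖ ^ 2 ≤ C * exp (-(s / 2) * t) := by
  set B := exp (s / 2 * t₀) * lyapunovEnergy f s β xstar (x t₀) (x' t₀)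
  refine ⟨2 / s ^ 2 * B, fun t ht => ?_⟩
  have hB := hx.exp_mul_lyapunovEnergy_add_integral_le hs hβ0 hsβ hf hmin hfd hgd ht
  have hI := intervalIntegral.integral_nonneg (μ := volume) ht fun u _ =>
    (by positivity : 0 ≤ exp (s / 2 * u) * (3 * s / 16 * ‖x' u‖ ^ 2))
  have hE := sq_norm_sub_le_lyapunovEnergy (β := β) hf hmin (hfd xstar) (x t) (x' t)
  calc ‖x t - xstar‖ ^ 2 ≤ 2 / s ^ 2 * lyapunovEnergy f s β xstar (x t) (x' t) := by
        rw [div_mul_eq_mul_div, le_div_iff₀ (by positivity)]; linarith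
    _ = 2 / s ^ 2 * exp (-(s / 2) * t)
          * (exp (s / 2 * t) * lyapunovEnergy f s β xstar (x t) (x' t)) := by
        rw [mul_assoc (2 / s ^ 2), ← mul_assoc (exp _), ← exp_add]; simp
    _ ≤ 2 / s ^ 2 * exp (-(s / 2) * t) * B := by gcongr; linarith
    _ = 2 / s ^ 2 * B * exp (-(s / 2) * t) := by ring

theorem IsDINSolution.integrableOn_exp_mul_sq_norm_velocity
    (hx : IsDINSolution f (2 * s) β t₀ x x' x'') (hs : 0 < s) (hβ0 : 0 ≤ β)
    (hsβ : s * β ≤ 1 / 2) (hf : StrongConvexOn univ (s ^ 2) f) (hmin : ∀ y, f xstar ≤ f y)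
    (hfd : Differentiable ℝ f) (hgd : Differentiable ℝ (gradient f)) :
    IntegrableOn (fun t => exp (s / 2 * t) * ‖x' t‖ ^ 2) (Ici t₀) := by
  have hv : ContinuousOn x' (Ici t₀) := fun u hu =>
    (hx.hasDerivAt_velocity u hu).continuousAt.continuousWithinAt
  have := integrableOn_Ici_of_intervalIntegral_le
    (g := fun u => exp (s / 2 * u) * (3 * s / 16 * ‖x' u‖ ^ 2))
    (B := exp (s / 2 * t₀) * lyapunovEnergy f s β xstar (x t₀) (x' t₀))
    ((continuous_exp.comp (continuous_const_mul _)).continuousOn.mul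
      (continuousOn_const.mul (hv.norm.pow 2)))
    (fun t _ => by positivity) fun t ht => by
      have hE := mul_nonneg (exp_pos (s / 2 * t)).le
        (lyapunovEnergy_nonneg (s := s) (β := β) hmin (x t) (x' t))
      linarith [hx.exp_mul_lyapunovEnergy_add_integral_le hs hβ0 hsβ hf hmin hfd hgd ht]
  refine IntegrableOn.congr_fun (this.const_mul (16 / (3 * s))) (fun t _ => ?_) measurableSet_Ici
  field_simp

end Lyapunov

end InnerProduct

theorem din_strongly_convex_exponential_gradient_rate_general
    {H : Type*} [NormedAddCommGroup H] [InnerProductSpace ℝ H] [CompleteSpace H]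
    (f : H → ℝ) (hf : ContDiff ℝ 2 f)
    (μ : ℝ) (hμ : 0 < μ)
    (hsc : ConvexOn ℝ Set.univ (fun z => f z - μ / 2 * ‖z‖ ^ 2))
    (xstar : H) (hmin : ∀ y, f xstar ≤ f y)
    (β : ℝ) (hβ0 : 0 ≤ β) (hβ : β ≤ 1 / (2 * Real.sqrt μ))
    (t₀ : ℝ)
    (x x' x'' : ℝ → H)
    (hx' : ∀ t ≥ t₀, HasDerivAt x (x' t) t)
    (hx'' : ∀ t ≥ t₀, HasDerivAt x' (x'' t) t)
    (hode : ∀ t ≥ t₀,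
      x'' t + (2 * Real.sqrt μ) • x' t
        + β • (fderiv ℝ (gradient f) (x t)) (x' t) + gradient f (x t) = 0) :
    (∃ C₁ > 0, ∀ t ≥ t₀,
        Real.exp (-Real.sqrt μ * t) *
            (∫ u in t₀..t, Real.exp (Real.sqrt μ * u) * ‖gradient f (x u)‖ ^ 2)
          ≤ C₁ * Real.exp (-(Real.sqrt μ / 2) * t)) ∧
      MeasureTheory.IntegrableOn
        (fun t => Real.exp ((Real.sqrt μ / 2) * t) * ‖x' t‖ ^ 2)
        (Set.Ici t₀) := by
  set s := √μ
  have hs : 0 < s := sqrt_pos.2 hμ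
  have hsβ : s * β ≤ 1 / 2 := by
    have := (le_div_iff₀ (by positivity)).1 hβ
    linarith
  have hf' : StrongConvexOn univ (s ^ 2) f := by rwa [sq_sqrt hμ.le, strongConvexOn_iff_convex]
  have hfd : Differentiable ℝ f := hf.differentiable (by norm_num)
  have hgrad : ContDiff ℝ 1 (gradient f) :=
    (InnerProductSpace.toDual ℝ H).symm.contDiff.comp (hf.fderiv_right (by norm_num))
  have hgd : Differentiable ℝ (gradient f) := hgrad.differentiable one_ne_zero
  have hx : IsDINSolution f (2 * s) β t₀ x x' x'' := ⟨hx', hx'', hode⟩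
  refine ⟨?_, hx.integrableOn_exp_mul_sq_norm_velocity hs hβ0 hsβ hf' hmin hfd hgd⟩
  obtain ⟨C, hC⟩ := hx.exists_sq_norm_sub_le_mul_exp hs hβ0 hsβ hf' hmin hfd hgd
  have hgx : ContinuousOn (fun t => gradient f (x t)) (Ici t₀) :=
    hgrad.continuous.comp_continuousOn fun u hu => (hx' u hu).continuousAt.continuousWithinAt
  obtain ⟨K, hK, hgK⟩ := exists_sq_norm_le_mul_exp_of_sq_norm_sub_le (half_pos hs)
    (IsLocalMin.gradient_eq_zero (Eventually.of_forall hmin)) (hgd xstar) hgx hC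
  refine ⟨K / (s - s / 2), by simp only [sub_half]; positivity, fun t ht => ?_⟩
  exact exp_neg_mul_integral_exp_mul_le (half_lt_self hs) hK.le ht
    ((hgx.norm.pow 2).mono Icc_subset_Ici_self) fun u hu => hgK u hu.1

/-- Theorem 4.1 (ii): exponential decay (in average) of the gradients and
integrability of the speed for the strongly convex inertial dynamic. -/
theorem din_strongly_convex_exponential_gradient_rate
    {H : Type*} [NormedAddCommGroup H] [InnerProductSpace ℝ H] [CompleteSpace H]
    (f : H → ℝ) (hf : ContDiff ℝ 2 f)
    (μ : ℝ) (hμ : 0 < μ)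
    (hsc : ConvexOn ℝ Set.univ (fun z => f z - μ / 2 * ‖z‖ ^ 2))
    (xstar : H) (hmin : ∀ y, f xstar ≤ f y)
    (β : ℝ) (hβ0 : 0 ≤ β) (hβ : β ≤ 1 / (2 * Real.sqrt μ))
    (t₀ : ℝ) (ht₀ : 0 < t₀)
    (x x' x'' : ℝ → H)
    (hx' : ∀ t ≥ t₀, HasDerivAt x (x' t) t)
    (hx'' : ∀ t ≥ t₀, HasDerivAt x' (x'' t) t)
    (hx''cont : ContinuousOn x'' (Set.Ici t₀))
    (hode : ∀ t ≥ t₀,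
      x'' t + (2 * Real.sqrt μ) • x' t
        + β • (fderiv ℝ (gradient f) (x t)) (x' t) + gradient f (x t) = 0) :
    (∃ C₁ > 0, ∀ t ≥ t₀,
        Real.exp (-Real.sqrt μ * t) *
            (∫ u in t₀..t, Real.exp (Real.sqrt μ * u) * ‖gradient f (x u)‖ ^ 2)
          ≤ C₁ * Real.exp (-(Real.sqrt μ / 2) * t)) ∧
      MeasureTheory.IntegrableOn
        (fun t => Real.exp ((Real.sqrt μ / 2) * t) * ‖x' t‖ ^ 2)
        (Set.Ici t₀) :=
  din_strongly_convex_exponential_gradient_rate_general f hf μ hμ hsc xstar hmin β hβ0 hβ t₀ x x'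
    x'' hx' hx'' hode
end
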